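/- arXiv:2403.09465 — 4 statements merged into one kernel-verified Lean document; each statement's English description precedes it below -/
import Mathlib

section
/- For every odd d there exists a univariate polynomial f of degree d on [-1,1] such that ‖f‖_{[-1,1],∞} ≥ (d²/8) ‖f‖_{[-1,1],1}. Consequently, for every n, the product polynomial f_n(x₁,…,x_n) = ∏ᵢ f(xᵢ) of individual degree d satisfies ‖f_n‖_{[-1,1]ⁿ,∞} ≥ (d²/8)ⁿ ‖f_n‖_{[-1,1]ⁿ,1}. -/
/-!
Let `Pₙ` be the Legendre polynomial, `d = 2n - 1` and `f(x) = (1 + x) Pₙ'(x)²`, which is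
nonnegative on `[-1, 1]`. Integrating `(1 + x) Pₙ'² = ((1 + x) Pₙ' Pₙ)' - Pₙ ((1 + x) Pₙ')'` and
using that `Pₙ` is orthogonal to all polynomials of degree `< n` gives `∫ f = 2 Pₙ'(1) Pₙ(1)`,
while `f(1) = 2 Pₙ'(1)²`. Since `Pₙ'(1) = n(n+1)/2 · Pₙ(1)`, we get
`f(1) = n(n+1)/2 · ∫ f ≥ d²/8 · ∫ f`. For the product polynomial the integral over the cube
factors, and the sup norm is at least the value at `(1, …, 1)`.
-/

open Set MeasureTheory Polynomial
open scoped Nat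

namespace Polynomial

lemma natDegree_iterate_derivative_eq {R : Type*} [Semiring R] [IsAddTorsionFree R] (p : R[X])
    (k : ℕ) : (derivative^[k] p).natDegree = p.natDegree - k := by
  induction k with
  | zero => rfl
  | succ k ih => rw [Function.iterate_succ_apply', natDegree_derivative, ih, Nat.sub_sub]

lemma eval_iterate_derivative_X_sub_C_pow_mul {R : Type*} [CommRing R] (c : R) (p : R[X])
    {n m : ℕ} (h : n ≤ m) :
    (derivative^[m] ((X - C c) ^ n * p)).eval c =
      m.choose n * n ! * (derivative^[m - n] p).eval c := by
  rw [iterate_derivative_mul, eval_finsetSum, Finset.sum_eq_single (m - n)]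
  · rw [Nat.sub_sub_self h, iterate_derivative_X_sub_pow_self, Nat.choose_symm h]
    simp [mul_assoc]
  · intro k hk hkn
    have hkm : k ≤ m := Nat.lt_succ_iff.mp (Finset.mem_range.mp hk)
    rw [iterate_derivative_X_sub_pow]
    rcases lt_or_gt_of_ne (show m - k ≠ n by omega) with hlt | hgt
    · simp [zero_pow (Nat.sub_ne_zero_of_lt hlt)]
    · simp [Nat.descFactorial_eq_zero_iff_lt.mpr hgt]
  · simp

lemma isRoot_iterate_derivative_X_sq_sub_one_pow {R : Type*} [CommRing R] {n k : ℕ} (hk : k < n)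
    {x : R} (hx : x ^ 2 = 1) : (derivative^[k] ((X ^ 2 - 1 : R[X]) ^ n)).IsRoot x := by
  obtain ⟨r, hr⟩ := pow_sub_dvd_iterate_derivative_pow (X ^ 2 - 1 : R[X]) n k
  rw [IsRoot, hr]
  simp [hx, zero_pow (Nat.sub_ne_zero_of_lt hk)]

lemma integral_eval_derivative (p : ℝ[X]) (a b : ℝ) :
    ∫ x in a..b, (derivative p).eval x = p.eval b - p.eval a :=
  intervalIntegral.integral_eq_sub_of_hasDerivAt (fun x _ => p.hasDerivAt x)
    ((derivative p).continuous.intervalIntegrable a b)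

lemma integral_iterate_derivative_mul_eq_zero {a b : ℝ} {p : ℝ[X]} {n : ℕ}
    (ha : ∀ k < n, (derivative^[k] p).IsRoot a) (hb : ∀ k < n, (derivative^[k] p).IsRoot b)
    {g : ℝ[X]} (hg : g.natDegree < n) :
    ∫ x in a..b, (derivative^[n] p * g).eval x = 0 := by
  induction n generalizing g with
  | zero => exact absurd hg (Nat.not_lt_zero _)
  | succ n ih =>
    have hparts : derivative^[n + 1] p * g =
        derivative (derivative^[n] p * g) - derivative^[n] p * derivative g := by
      rw [Function.iterate_succ_apply', derivative_mul]
      ring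
    have hboundary : ∫ x in a..b, (derivative (derivative^[n] p * g)).eval x = 0 := by
      rw [integral_eval_derivative, eval_mul, eval_mul, (ha n n.lt_succ_self).eq_zero,
        (hb n n.lt_succ_self).eq_zero, zero_mul, zero_mul, sub_zero]
    have hlower : ∫ x in a..b, (derivative^[n] p * derivative g).eval x = 0 := by
      rcases Nat.eq_zero_or_pos g.natDegree with hg0 | hg0
      · simp [derivative_of_natDegree_zero hg0]
      · exact ih (fun k hk => ha k (by omega)) (fun k hk => hb k (by omega))
          (by rw [natDegree_derivative]; omega)
    simp only [hparts, eval_sub]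
    rw [intervalIntegral.integral_sub ((Polynomial.continuous _).intervalIntegrable a b)
      ((Polynomial.continuous _).intervalIntegrable a b), hboundary, hlower, sub_zero]

/-- `rodrigues n = 2ⁿ n! Pₙ`, where `Pₙ` is the `n`-th Legendre polynomial (Rodrigues' formula). -/
noncomputable def rodrigues (n : ℕ) : ℝ[X] := derivative^[n] ((X ^ 2 - 1) ^ n)

lemma X_sq_sub_one_pow (n : ℕ) :
    (X ^ 2 - 1 : ℝ[X]) ^ n = (X - C 1) ^ n * (X - C (-1)) ^ n := by
  rw [← mul_pow]
  congr 1
  simp only [map_one, map_neg]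
  ring

lemma rodrigues_eval_one (n : ℕ) : (rodrigues n).eval 1 = n ! * 2 ^ n := by
  rw [rodrigues, X_sq_sub_one_pow, eval_iterate_derivative_X_sub_C_pow_mul _ _ le_rfl]
  norm_num

lemma derivative_rodrigues_eval_one (n : ℕ) :
    (derivative (rodrigues n)).eval 1 = n * (n + 1) / 2 * (rodrigues n).eval 1 := by
  rw [rodrigues_eval_one, rodrigues, ← Function.iterate_succ_apply' derivative, X_sq_sub_one_pow,
    eval_iterate_derivative_X_sub_C_pow_mul _ _ n.le_succ, Nat.succ_sub n.le_refl, Nat.sub_self,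
    Function.iterate_one, derivative_X_sub_C_pow]
  rcases n with _ | n
  · simp
  · simp [pow_succ]
    ring

lemma natDegree_derivative_rodrigues (n : ℕ) : (derivative (rodrigues n)).natDegree = n - 1 := by
  rw [rodrigues, ← Function.iterate_succ_apply' derivative, natDegree_iterate_derivative_eq,
    natDegree_pow, ← C_1, natDegree_X_pow_sub_C]
  omega

lemma integral_rodrigues_mul_eq_zero {n : ℕ} {g : ℝ[X]} (hg : g.natDegree < n) :
    ∫ x in (-1)..1, (rodrigues n * g).eval x = 0 :=
  integral_iterate_derivative_mul_eq_zero
    (fun _ hk => isRoot_iterate_derivative_X_sq_sub_one_pow hk (by norm_num))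
    (fun _ hk => isRoot_iterate_derivative_X_sq_sub_one_pow hk (by norm_num)) hg

lemma integral_X_add_one_mul_derivative_rodrigues_sq {n : ℕ} (hn : n ≠ 0) :
    ∫ x in (-1)..1, ((X + C 1) * derivative (rodrigues n) ^ 2).eval x =
      2 * (derivative (rodrigues n)).eval 1 * (rodrigues n).eval 1 := by
  set q := derivative (rodrigues n) with hq
  have hparts : (X + C 1) * q ^ 2 =
      derivative ((X + C 1) * q * rodrigues n) - rodrigues n * derivative ((X + C 1) * q) := by
    simp only [derivative_mul, derivative_add, derivative_X, derivative_C, ← hq]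
    ring
  have hdeg : (derivative ((X + C 1) * q)).natDegree < n := by
    have hmul := natDegree_mul_le (p := X + C 1) (q := q)
    rw [natDegree_derivative_rodrigues, natDegree_X_add_C] at hmul
    rw [natDegree_derivative]
    omega
  simp only [hparts, eval_sub]
  rw [intervalIntegral.integral_sub ((Polynomial.continuous _).intervalIntegrable _ _)
    ((Polynomial.continuous _).intervalIntegrable _ _), integral_eval_derivative,
    integral_rodrigues_mul_eq_zero hdeg]
  simp only [eval_mul, eval_add, eval_X, eval_C]
  ring

end Polynomial

theorem exists_natDegree_eq_mul_integral_abs_le_abs_eval_one {d : ℕ} (hd : Odd d) :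
    ∃ f : ℝ[X], f.natDegree = d ∧
      (d : ℝ) ^ 2 / 8 * ∫ x in Icc (-1 : ℝ) 1, |f.eval x| ≤ |f.eval 1| := by
  obtain ⟨m, rfl⟩ := hd
  set q := derivative (rodrigues (m + 1))
  have hr : 0 < (rodrigues (m + 1)).eval 1 := by
    rw [rodrigues_eval_one]
    positivity
  set r := (rodrigues (m + 1)).eval 1
  have hq1 : q.eval 1 = (m + 1) * (m + 2) / 2 * r := by
    rw [derivative_rodrigues_eval_one]
    push_cast
    ring
  have hq1_pos : 0 < q.eval 1 := by
    rw [hq1]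
    positivity
  have hq : q ≠ 0 := fun h => by simp [h] at hq1_pos
  have hf_nonneg : ∀ x ∈ Icc (-1 : ℝ) 1, 0 ≤ ((X + C 1) * q ^ 2).eval x := fun x hx => by
    simp only [eval_mul, eval_add, eval_X, eval_C, eval_pow]
    exact mul_nonneg (by linarith [hx.1]) (sq_nonneg _)
  have hintegral : ∫ x in Icc (-1 : ℝ) 1, |((X + C 1) * q ^ 2).eval x| = 2 * q.eval 1 * r := by
    rw [setIntegral_congr_fun measurableSet_Icc fun x hx => abs_of_nonneg (hf_nonneg x hx),
      integral_Icc_eq_integral_Ioc, ← intervalIntegral.integral_of_le (by norm_num),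
      integral_X_add_one_mul_derivative_rodrigues_sq m.succ_ne_zero]
  refine ⟨(X + C 1) * q ^ 2, ?_, ?_⟩
  · rw [natDegree_mul (X_add_C_ne_zero 1) (pow_ne_zero 2 hq), natDegree_X_add_C, natDegree_pow,
      natDegree_derivative_rodrigues]
    omega
  · rw [hintegral, abs_of_nonneg (hf_nonneg 1 (by norm_num))]
    simp only [eval_mul, eval_add, eval_X, eval_C, eval_pow, hq1]
    push_cast
    nlinarith [mul_nonneg (mul_nonneg (sq_nonneg r) (by positivity : (0 : ℝ) ≤ (m + 1) * (m + 2)))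
      (by positivity : (0 : ℝ) ≤ 8 * m + 7)]

lemma setIntegral_univ_pi_abs_prod {ι : Type*} [Fintype ι] (s : Set ℝ) (f : ℝ → ℝ) :
    ∫ x in univ.pi fun _ : ι => s, |∏ i, f (x i)| = (∫ t in s, |f t|) ^ Fintype.card ι := by
  simp_rw [volume_pi, Measure.restrict_pi_pi, Finset.abs_prod]
  exact integral_fintype_prod_eq_pow (fun t => |f t|)

lemma IsCompact.le_csSup_image {α : Type*} [TopologicalSpace α] {K : Set α} (hK : IsCompact K)
    {g : α → ℝ} (hg : ContinuousOn g K) {x : α} (hx : x ∈ K) : g x ≤ sSup (g '' K) :=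
  le_csSup (hK.image_of_continuousOn hg).bddAbove (mem_image_of_mem g hx)

/-- For every odd `d` there is a univariate polynomial `f` of degree `d` with
`‖f‖_{[-1,1],∞} ≥ (d²/8) ‖f‖_{[-1,1],1}`, and the product polynomial
`f_n(x) = ∏ᵢ f(xᵢ)` satisfies `‖f_n‖_∞ ≥ (d²/8)ⁿ ‖f_n‖₁` on `[-1,1]ⁿ`. -/
theorem stmt3 (d : ℕ) (hd : Odd d) :
    ∃ f : Polynomial ℝ, f.natDegree = d ∧
      sSup ((fun x => |f.eval x|) '' Icc (-1 : ℝ) 1) ≥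
        ((d : ℝ) ^ 2 / 8) * ∫ x in Icc (-1 : ℝ) 1, |f.eval x| ∧
      ∀ n : ℕ,
        sSup ((fun x : Fin n → ℝ => |∏ i, f.eval (x i)|) ''
            Set.pi Set.univ (fun _ : Fin n => Icc (-1 : ℝ) 1)) ≥
          ((d : ℝ) ^ 2 / 8) ^ n *
            ∫ x in Set.pi Set.univ (fun _ : Fin n => Icc (-1 : ℝ) 1),
              |∏ i, f.eval (x i)| := by
  obtain ⟨f, hdeg, hf⟩ := exists_natDegree_eq_mul_integral_abs_le_abs_eval_one hd
  have hsup : |f.eval 1| ≤ sSup ((fun x => |f.eval x|) '' Icc (-1 : ℝ) 1) :=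
    isCompact_Icc.le_csSup_image (g := fun x => |f.eval x|) (by fun_prop)
      (right_mem_Icc.mpr (by norm_num))
  refine ⟨f, hdeg, hf.trans hsup, fun n => ?_⟩
  calc ((d : ℝ) ^ 2 / 8) ^ n * ∫ x in univ.pi fun _ : Fin n => Icc (-1 : ℝ) 1, |∏ i, f.eval (x i)|
      = ((d : ℝ) ^ 2 / 8 * ∫ x in Icc (-1 : ℝ) 1, |f.eval x|) ^ n := by
        rw [setIntegral_univ_pi_abs_prod _ fun x => f.eval x, Fintype.card_fin, mul_pow]
    _ ≤ |f.eval 1| ^ n := pow_le_pow_left₀ (by positivity) hf n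
    _ = |∏ i, f.eval ((fun _ : Fin n => (1 : ℝ)) i)| := by simp [abs_pow]
    _ ≤ _ := (isCompact_univ_pi fun _ => isCompact_Icc).le_csSup_image
        (g := fun x : Fin n → ℝ => |∏ i, f.eval (x i)|) (by fun_prop)
        fun i _ => right_mem_Icc.mpr (by norm_num)
end

section
/- Let m ∈ ℕ and P_{m+1} be the degree-(m+1) Legendre polynomial. Define p : [0,1] → ℝ by p(x) = x·(P'_{m+1}(2x-1))². Then sup_{x∈[0,1]} |p(x)| = (m+1)(m+2)·∫₀¹ |p(x)| dx, i.e., ‖p‖_{[0,1],∞} = (m+1)(m+2)·‖p‖_{[0,1],1}. -/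
open Set MeasureTheory Polynomial

/-!
On `[0,1]` the function `x · P'(2x-1)²` is dominated by `P'(1)²`, attained at `x = 1`. After the
substitution `y = 2x - 1` its integral is `¼ ∫₋₁¹ (y+1) P'(y)²`, and integrating by parts against
`P` turns this into `¼ (2 P'(1) P(1) - ∫₋₁¹ ((y+1) P'(y))' P(y))`; the last integral vanishes by
orthogonality since `((X+1) P')'` has degree at most `deg P - 1`. With `P(1) = 1` the integral is
`P'(1)/2`, and `P'(1) = (m+1)(m+2)/2` gives the ratio.
-/

theorem sSup_abs_mul_sq_comp_two_mul_sub_one (f : ℝ → ℝ)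
    (hf : ∀ y ∈ Icc (-1 : ℝ) 1, |f y| ≤ f 1) :
    sSup ((fun x => |x * f (2 * x - 1) ^ 2|) '' Icc (0 : ℝ) 1) = f 1 ^ 2 := by
  refine IsGreatest.csSup_eq ⟨⟨1, by norm_num, by norm_num⟩, ?_⟩
  rintro _ ⟨x, ⟨hx0, hx1⟩, rfl⟩
  have hsq : f (2 * x - 1) ^ 2 ≤ f 1 ^ 2 := by
    rw [← sq_abs]
    exact pow_le_pow_left₀ (abs_nonneg _) (hf _ ⟨by linarith, by linarith⟩) 2
  dsimp only
  rw [abs_of_nonneg (by positivity)]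
  nlinarith [sq_nonneg (f (2 * x - 1))]

theorem setIntegral_Icc_abs_mul_sq_comp_two_mul_sub_one (f : ℝ → ℝ) :
    ∫ x in Icc (0 : ℝ) 1, |x * f (2 * x - 1) ^ 2| =
      (∫ y in (-1 : ℝ)..1, (y + 1) * f y ^ 2) / 4 := by
  calc ∫ x in Icc (0 : ℝ) 1, |x * f (2 * x - 1) ^ 2|
      = ∫ x in (0 : ℝ)..1, (fun y => (y + 1) * f y ^ 2 / 2) (2 * x - 1) := by
        rw [intervalIntegral.integral_of_le zero_le_one, ← integral_Icc_eq_integral_Ioc]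
        refine setIntegral_congr_fun measurableSet_Icc fun x hx => ?_
        rw [abs_of_nonneg (mul_nonneg hx.1 (sq_nonneg _))]
        ring_nf
    _ = (2⁻¹ : ℝ) • ∫ y in (2 * 0 - 1 : ℝ)..(2 * 1 - 1), (y + 1) * f y ^ 2 / 2 :=
        intervalIntegral.integral_comp_mul_sub (fun y => (y + 1) * f y ^ 2 / 2) two_ne_zero 1
    _ = (∫ y in (-1 : ℝ)..1, (y + 1) * f y ^ 2) / 4 := by
        rw [smul_eq_mul, intervalIntegral.integral_div]
        norm_num
        ring

theorem natDegree_derivative_X_add_one_mul_derivative_lt {n : ℕ} {P : ℝ[X]}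
    (hdeg : P.natDegree ≤ n + 1) :
    (derivative ((X + 1) * derivative P)).natDegree < n + 1 := by
  have hP' : (derivative P).natDegree ≤ n := by
    have := natDegree_derivative_le P
    omega
  have hQ : ((X + 1) * derivative P).natDegree ≤ n + 1 :=
    natDegree_mul_le.trans (by
      have : (X + 1 : ℝ[X]).natDegree ≤ 1 := by compute_degree!
      omega)
  have := natDegree_derivative_le ((X + 1) * derivative P)
  omega

theorem integral_add_one_mul_sq_derivative_of_orthogonal {n : ℕ} {P : ℝ[X]}
    (hdeg : P.natDegree ≤ n + 1)
    (horth : ∀ q : ℝ[X], q.natDegree < n + 1 →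
      ∫ y in Icc (-1 : ℝ) 1, P.eval y * q.eval y = 0) :
    ∫ y in (-1 : ℝ)..1, (y + 1) * (derivative P).eval y ^ 2 =
      2 * (derivative P).eval 1 * P.eval 1 := by
  set Q := (X + 1) * derivative P
  have horthQ : ∫ y in (-1 : ℝ)..1, (derivative Q).eval y * P.eval y = 0 := by
    rw [intervalIntegral.integral_of_le (by norm_num), ← integral_Icc_eq_integral_Ioc]
    simp_rw [mul_comm ((derivative Q).eval _)]
    exact horth _ (natDegree_derivative_X_add_one_mul_derivative_lt hdeg)
  have hparts := intervalIntegral.integral_mul_deriv_eq_deriv_mul (a := -1) (b := 1)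
    (fun x _ => Q.hasDerivAt x) (fun x _ => P.hasDerivAt x)
    ((derivative Q).continuous.intervalIntegrable _ _)
    ((derivative P).continuous.intervalIntegrable _ _)
  rw [horthQ] at hparts
  calc ∫ y in (-1 : ℝ)..1, (y + 1) * (derivative P).eval y ^ 2
      = ∫ y in (-1 : ℝ)..1, Q.eval y * (derivative P).eval y := by
        refine intervalIntegral.integral_congr fun y _ => ?_
        simp only [Q, eval_mul, eval_add, eval_X, eval_one]
        ring
    _ = 2 * (derivative P).eval 1 * P.eval 1 := by
        rw [hparts]
        simp only [Q, eval_mul, eval_add, eval_X, eval_one]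
        ring

/-- Let `P` be the degree-`(m+1)` Legendre polynomial (characterized here by:
orthogonality on `[-1,1]` to all polynomials of lower degree, `P 1 = 1`,
`P' 1 = (m+1)(m+2)/2`, and `sup_{[-1,1]} |P'| = P' 1`).  For
`p x = x · (P'(2x-1))²` on `[0,1]` one has
`‖p‖_{[0,1],∞} = (m+1)(m+2) · ‖p‖_{[0,1],1}`. -/
theorem stmt4 (m : ℕ) (P : Polynomial ℝ)
    (hdeg : P.natDegree = m + 1)
    (horth : ∀ q : Polynomial ℝ, q.natDegree < m + 1 →
      ∫ y in Icc (-1 : ℝ) 1, P.eval y * q.eval y = 0)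
    (hP1 : P.eval 1 = 1)
    (hP'1 : P.derivative.eval 1 = ((m : ℝ) + 1) * ((m : ℝ) + 2) / 2)
    (hP'max : ∀ y ∈ Icc (-1 : ℝ) 1, |P.derivative.eval y| ≤ P.derivative.eval 1) :
    sSup ((fun x => |x * (P.derivative.eval (2 * x - 1)) ^ 2|) '' Icc (0 : ℝ) 1) =
      ((m : ℝ) + 1) * ((m : ℝ) + 2) *
        ∫ x in Icc (0 : ℝ) 1, |x * (P.derivative.eval (2 * x - 1)) ^ 2| := by
  rw [sSup_abs_mul_sq_comp_two_mul_sub_one _ hP'max,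
    setIntegral_Icc_abs_mul_sq_comp_two_mul_sub_one (derivative P).eval,
    integral_add_one_mul_sq_derivative_of_orthogonal hdeg.le horth, hP1, hP'1]
  ring
end

section
/- For every α > 0 the Chebyshev polynomial of the first kind satisfies T_d(1 + α/d²) > α²/8 for all integers d ≥ 2. -/
open Polynomial Polynomial.Chebyshev

private lemma cheb_aux (y : ℝ) (hy : 0 ≤ y) : ∀ n : ℕ, 2 ≤ n →
    (1 + (n : ℝ) ^ 2 * y + (n : ℝ) ^ 4 * y ^ 2 / 8
        ≤ (T ℝ (n : ℤ)).eval (1 + y)) ∧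
    (((n : ℝ) ^ 2 - ((n : ℝ) - 1) ^ 2) * y
        + ((n : ℝ) ^ 4 - ((n : ℝ) - 1) ^ 4) * y ^ 2 / 8
        ≤ (T ℝ (n : ℤ)).eval (1 + y) - (T ℝ ((n : ℤ) - 1)).eval (1 + y)) := by
  intro n hn
  induction n, hn using Nat.le_induction with
  | base =>
      norm_num [T_two, T_one]
      constructor <;> nlinarith [sq_nonneg y]
  | succ n hn ih =>
      have h1 := (ih).1
      have h2 := (ih).2
      have hrec := T_add_two ℝ ((n : ℤ) - 1)
      have hsimp : ((n : ℤ) - 1) + 2 = (n : ℤ) + 1 := by ring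
      have hsimp2 : ((n : ℤ) - 1) + 1 = (n : ℤ) := by ring
      rw [hsimp, hsimp2] at hrec
      have heval : (T ℝ ((n : ℤ) + 1)).eval (1 + y)
          = 2 * (1 + y) * (T ℝ (n : ℤ)).eval (1 + y)
            - (T ℝ ((n : ℤ) - 1)).eval (1 + y) := by
        rw [hrec]; simp [Polynomial.eval_mul, Polynomial.eval_sub]
      have hn' : (2 : ℝ) ≤ (n : ℝ) := by exact_mod_cast hn
      have hcast : ((n + 1 : ℕ) : ℤ) = (n : ℤ) + 1 := by push_cast; ring
      have hcast2 : ((n + 1 : ℕ) : ℤ) - 1 = (n : ℤ) := by push_cast; ring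
      have h3 : 2*y*(1 + (n:ℝ)^2*y + (n:ℝ)^4*y^2/8)
          ≤ 2*y*(T ℝ (n : ℤ)).eval (1 + y) :=
        mul_le_mul_of_nonneg_left h1 (by positivity)
      have h4 : (1:ℝ) ≤ (n:ℝ)^2 := by nlinarith
      have h5 : (0:ℝ) ≤ y^3 * (n:ℝ)^4 := by positivity
      constructor
      · rw [hcast, heval]
        push_cast
        nlinarith [h1, h2, h3, h4, h5, hy, sq_nonneg y,
          mul_nonneg (sq_nonneg y) (by nlinarith : (0:ℝ) ≤ (n:ℝ)^2 - 1)]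
      · rw [hcast2, hcast, heval]
        push_cast
        nlinarith [h1, h2, h3, h4, h5, hy, sq_nonneg y,
          mul_nonneg (sq_nonneg y) (by nlinarith : (0:ℝ) ≤ (n:ℝ)^2 - 1)]

/-- For every `α > 0` and every integer `d ≥ 2`, the Chebyshev polynomial of
the first kind satisfies `T_d(1 + α/d²) > α²/8`. -/
theorem stmt15 (α : ℝ) (hα : 0 < α) (d : ℕ) (hd : 2 ≤ d) :
    α ^ 2 / 8 < (Polynomial.Chebyshev.T ℝ d).eval (1 + α / (d : ℝ) ^ 2) := by
  have hd0 : (0 : ℝ) < (d : ℝ) ^ 2 := by positivity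
  have hy : 0 ≤ α / (d : ℝ) ^ 2 := by positivity
  have h := (cheb_aux (α / (d : ℝ) ^ 2) hy d hd).1
  have hkey : (d : ℝ) ^ 2 * (α / (d : ℝ) ^ 2) = α := by field_simp
  have hkey2 : (d : ℝ) ^ 4 * (α / (d : ℝ) ^ 2) ^ 2 / 8 = α ^ 2 / 8 := by
    field_simp
  calc α ^ 2 / 8 < 1 + α + α ^ 2 / 8 := by linarith
    _ = 1 + (d : ℝ) ^ 2 * (α / (d : ℝ) ^ 2) + (d : ℝ) ^ 4 * (α / (d : ℝ) ^ 2) ^ 2 / 8 := by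
        rw [hkey, hkey2]
    _ ≤ _ := h
end

section
/- Define f : [-1,1]ⁿ → ℝ by f(x) = (∏ᵢ T_d(xᵢ + α/d²)) / (T_d(1 + α/d²))^{n−1}, where T_d is the Chebyshev polynomial of the first kind and α > 0. Then for every x ∈ [-1,1]ⁿ \ [1 − α/d², 1]ⁿ, |f(x)| ≤ 1, while f(1,…,1) = T_d(1 + α/d²). -/
/-!
`T_d` is bounded by `1` on `[-1, 1]` and increasing on `[1, ∞)` (there `T_d (cosh t) = cosh (d t)`),
so every factor `T_d(xᵢ + α/d²)` is at most `T_d(1 + α/d²)` in absolute value, and the factor at a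
coordinate with `xᵢ + α/d² ≤ 1` is at most `1`.
-/

open Set

namespace Polynomial.Chebyshev

open Real

theorem monotoneOn_eval_T_real (n : ℤ) : MonotoneOn (fun x => (T ℝ n).eval x) (Ici 1) := by
  intro x hx y hy hxy
  simp only
  rw [← cosh_arcosh hx, ← cosh_arcosh hy, T_real_cosh, T_real_cosh, cosh_le_cosh, abs_mul,
    abs_mul, abs_of_nonneg (arcosh_nonneg hx), abs_of_nonneg (arcosh_nonneg hy)]
  gcongr
  exact (arcosh_le_arcosh (by linarith [mem_Ici.1 hx]) (by linarith [mem_Ici.1 hy])).2 hxy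

theorem abs_eval_T_real_le_eval_T_real (n : ℤ) {x y : ℝ} (hx : -1 ≤ x) (hxy : x ≤ y)
    (hy : 1 ≤ y) : |(T ℝ n).eval x| ≤ (T ℝ n).eval y := by
  rcases le_total x 1 with hx1 | hx1
  · exact (abs_eval_T_real_le_one n (abs_le.2 ⟨hx, hx1⟩)).trans (one_le_eval_T_real n hy)
  · rw [abs_of_nonneg (zero_le_one.trans (one_le_eval_T_real n hx1))]
    exact monotoneOn_eval_T_real n hx1 hy hxy

end Polynomial.Chebyshev

theorem Finset.abs_prod_le_pow_card_sub_one {ι R : Type*} [Fintype ι] [CommRing R] [LinearOrder R]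
    [IsStrictOrderedRing R] {f : ι → R} {M : R} (i : ι) (hi : |f i| ≤ 1)
    (hf : ∀ j, |f j| ≤ M) : |∏ j, f j| ≤ M ^ (Fintype.card ι - 1) := by
  classical
  rw [abs_prod, ← mul_prod_erase univ _ (mem_univ i)]
  calc |f i| * ∏ j ∈ univ.erase i, |f j| ≤ 1 * ∏ _j ∈ univ.erase i, M :=
        mul_le_mul hi (prod_le_prod (fun j _ => abs_nonneg _) fun j _ => hf j)
          (prod_nonneg fun j _ => abs_nonneg _) zero_le_one
    _ = M ^ (Fintype.card ι - 1) := by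
        rw [one_mul, prod_const, card_erase_of_mem (mem_univ i), card_univ]

open Polynomial.Chebyshev in
theorem stmt16_general (n d : ℕ) (hn : 1 ≤ n) (α : ℝ) (hα : 0 < α) :
    (∀ x : Fin n → ℝ,
      x ∈ Set.pi Set.univ (fun _ : Fin n => Icc (-1 : ℝ) 1) →
      x ∉ Set.pi Set.univ (fun _ : Fin n => Icc (1 - α / (d : ℝ) ^ 2) 1) →
      |(∏ i, (Polynomial.Chebyshev.T ℝ d).eval (x i + α / (d : ℝ) ^ 2)) /
          ((Polynomial.Chebyshev.T ℝ d).eval (1 + α / (d : ℝ) ^ 2)) ^ (n - 1)|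
        ≤ 1) ∧
    (∏ _i : Fin n, (Polynomial.Chebyshev.T ℝ d).eval (1 + α / (d : ℝ) ^ 2)) /
        ((Polynomial.Chebyshev.T ℝ d).eval (1 + α / (d : ℝ) ^ 2)) ^ (n - 1) =
      (Polynomial.Chebyshev.T ℝ d).eval (1 + α / (d : ℝ) ^ 2) := by
  set c : ℝ := α / (d : ℝ) ^ 2
  have hc : 0 ≤ c := by positivity
  have hM : 1 ≤ (T ℝ d).eval (1 + c) := one_le_eval_T_real _ (by linarith)
  have hMn : 0 < (T ℝ d).eval (1 + c) ^ (n - 1) := pow_pos (by linarith) _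
  refine ⟨fun x hx hbox => ?_, ?_⟩
  · simp only [mem_pi, mem_univ, mem_Icc, true_implies, not_forall] at hx hbox
    obtain ⟨i, hi⟩ := hbox
    have hxi : x i + c ≤ 1 := by by_contra! h; exact hi ⟨by linarith, (hx i).2⟩
    have hfactor : ∀ j, |(T ℝ d).eval (x j + c)| ≤ (T ℝ d).eval (1 + c) := fun j =>
      abs_eval_T_real_le_eval_T_real _ (by linarith [(hx j).1]) (by linarith [(hx j).2])
        (by linarith)
    have hfactor_i : |(T ℝ d).eval (x i + c)| ≤ 1 :=
      abs_eval_T_real_le_one _ (abs_le.2 ⟨by linarith [(hx i).1], hxi⟩)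
    rw [abs_div, abs_of_pos hMn, div_le_one hMn]
    simpa using Finset.abs_prod_le_pow_card_sub_one i hfactor_i hfactor
  · rw [Finset.prod_const, Finset.card_univ, Fintype.card_fin, ← pow_sub_one_mul (by omega),
      mul_div_cancel_left₀ _ hMn.ne']

/-- For `f(x) = (∏ᵢ T_d(xᵢ + α/d²)) / T_d(1 + α/d²)^{n−1}` on `[-1,1]ⁿ`:
outside the corner box `[1 − α/d², 1]ⁿ` one has `|f| ≤ 1`, while
`f(1,…,1) = T_d(1 + α/d²)`. -/
theorem stmt16 (n d : ℕ) (hn : 1 ≤ n) (hd : 1 ≤ d) (α : ℝ) (hα : 0 < α) :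
    (∀ x : Fin n → ℝ,
      x ∈ Set.pi Set.univ (fun _ : Fin n => Icc (-1 : ℝ) 1) →
      x ∉ Set.pi Set.univ (fun _ : Fin n => Icc (1 - α / (d : ℝ) ^ 2) 1) →
      |(∏ i, (Polynomial.Chebyshev.T ℝ d).eval (x i + α / (d : ℝ) ^ 2)) /
          ((Polynomial.Chebyshev.T ℝ d).eval (1 + α / (d : ℝ) ^ 2)) ^ (n - 1)|
        ≤ 1) ∧
    (∏ _i : Fin n, (Polynomial.Chebyshev.T ℝ d).eval (1 + α / (d : ℝ) ^ 2)) /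
        ((Polynomial.Chebyshev.T ℝ d).eval (1 + α / (d : ℝ) ^ 2)) ^ (n - 1) =
      (Polynomial.Chebyshev.T ℝ d).eval (1 + α / (d : ℝ) ^ 2) :=
  stmt16_general n d hn α hα
end
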